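/- arXiv:1905.05013 — 3 statements merged into one kernel-verified Lean document; each statement's English description precedes it below -/
import Mathlib

section
/- For states v, w : S, the configuration {w} is reachable from {v} under the reflexive-transitive closure of Step if and only if w is reachable from v under the reflexive-transitive closure of the relation (a, b) ↦ (a ∉ Ster ∧ child a b). In particular, a singleton {v} is reachable from the initial configuration {s₀} in the token game if and only if v is reachable from s₀ by a chain of child steps passing only through non-terminal states. (This establishes the one-to-one correspondence between states of the original game tree and reachable states of the constructed Ludii game used in the proof of Theorem 1.) -/
/-- The child relation of the game tree: `a` is the parent of `b`, i.e. `f b = a`. -/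
def Child {S : Type*} (s₀ : S) (f : ∀ s : S, s ≠ s₀ → S) (a b : S) : Prop :=
  ∃ h : b ≠ s₀, f b h = a

/-- Total version of the parent function (sending the root to itself). -/
def parentMap {S : Type*} [DecidableEq S] (s₀ : S) (f : ∀ s : S, s ≠ s₀ → S) (s : S) : S :=
  if h : s = s₀ then s₀ else f s h

/-- One step of the constructed Ludii token game: the token is removed from a
non-terminal vertex `v` of the configuration and placed on a child `w` of `v`. -/
def Step {S : Type*} [DecidableEq S] (s₀ : S) (Ster : Set S) (f : ∀ s : S, s ≠ s₀ → S)
    (c c' : Finset S) : Prop :=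
  ∃ v ∈ c, v ∉ Ster ∧ ∃ w, ∃ h : w ≠ s₀, f w h = v ∧ c' = insert w (c.erase v)

/-!
A move of the token game replaces one token by a token on a child, so from a one-token
configuration `{a}` the only moves lead to `{b}` with `b` a child of the non-terminal `a`.
Token-game runs from a singleton are therefore exactly images of non-terminal child chains
under the injective map `a ↦ {a}`.
-/

open Relation

theorem Relation.reflTransGen_on_iff_of_step_iff {α β : Type*} {r : α → α → Prop}
    {p : β → β → Prop} {g : α → β} (hg : Function.Injective g)
    (hstep : ∀ a c, p (g a) c ↔ ∃ b, r a b ∧ g b = c) (a b : α) :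
    ReflTransGen p (g a) (g b) ↔ ReflTransGen r a b := by
  refine ⟨fun h => ?_, fun h => h.lift g fun x y hxy => (hstep x _).2 ⟨y, hxy, rfl⟩⟩
  have hrange : ∀ c, ReflTransGen p (g a) c → ∃ b, ReflTransGen r a b ∧ g b = c := by
    intro c hc
    induction hc with
    | refl => exact ⟨a, .refl, rfl⟩
    | tail _ hpc ih =>
      obtain ⟨x, hax, rfl⟩ := ih
      obtain ⟨y, hxy, rfl⟩ := (hstep x _).1 hpc
      exact ⟨y, hax.tail hxy, rfl⟩
  obtain ⟨b', hab', hb'⟩ := hrange _ h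
  exact hg hb' ▸ hab'

theorem step_singleton_iff {S : Type*} [DecidableEq S] (s₀ : S) (Ster : Set S)
    (f : ∀ s : S, s ≠ s₀ → S) (a : S) (c : Finset S) :
    Step s₀ Ster f {a} c ↔ ∃ b, (a ∉ Ster ∧ Child s₀ f a b) ∧ {b} = c := by
  constructor
  · rintro ⟨x, hx, hxt, b, hb, rfl, rfl⟩
    rw [Finset.mem_singleton] at hx
    subst hx
    exact ⟨b, ⟨hxt, hb, rfl⟩, by simp⟩
  · rintro ⟨b, ⟨ha, hb, rfl⟩, rfl⟩
    exact ⟨_, Finset.mem_singleton_self _, ha, b, hb, rfl, by simp⟩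

theorem singleton_reachable_iff_general {S : Type*} [DecidableEq S]
    (s₀ : S) (Ster : Set S) (f : ∀ s : S, s ≠ s₀ → S)
    (v w : S) :
    Relation.ReflTransGen (Step s₀ Ster f) {v} {w} ↔
      Relation.ReflTransGen (fun a b : S => a ∉ Ster ∧ Child s₀ f a b) v w :=
  reflTransGen_on_iff_of_step_iff Finset.singleton_injective (step_singleton_iff s₀ Ster f) v w

/-- Reachability correspondence: `{w}` is reachable from `{v}` in the token game
iff `w` is reachable from `v` by child steps passing only through non-terminal
states. In particular (taking `v = s₀`), a singleton `{v}` is reachable from the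
initial configuration iff `v` is reachable from `s₀` through non-terminal states. -/
theorem singleton_reachable_iff {S : Type*} [Fintype S] [DecidableEq S]
    (s₀ : S) (Ster : Set S) (f : ∀ s : S, s ≠ s₀ → S)
    (hroot : ∀ s : S, Relation.ReflTransGen (Child s₀ f) s₀ s)
    (hterm : ∀ s : S, ∃ n : ℕ, (parentMap s₀ f)^[n] s = s₀)
    (v w : S) :
    Relation.ReflTransGen (Step s₀ Ster f) {v} {w} ↔
      Relation.ReflTransGen (fun a b : S => a ∉ Ster ∧ Child s₀ f a b) v w :=
  singleton_reachable_iff_general s₀ Ster f v w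
end

section
/- If a configuration c is reachable from the initial configuration {s₀} in exactly n steps of the relation Step (i.e., there is a chain c₀ = {s₀}, c₁, …, cₙ = c with Step cᵢ cᵢ₊₁ for all i < n), then c = {v} for a state v whose depth is exactly n. (The token moves strictly down the game tree, one level per move of the constructed Ludii game.) -/
theorem Nat.find_iterate_of_ne {α : Type*} [DecidableEq α] {g : α → α} {a x : α} (hx : x ≠ a)
    (h : ∃ n, g^[n] x = a) (h' : ∃ n, g^[n] (g x) = a) :
    Nat.find h = Nat.find h' + 1 := by
  rw [Nat.find_eq_iff]
  refine ⟨Nat.find_spec h', fun m hm => ?_⟩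
  cases m with
  | zero => exact hx
  | succ j => exact Nat.find_min h' (Nat.lt_of_succ_lt_succ hm)

section TokenGame

variable {S : Type*} [DecidableEq S] {s₀ : S} {f : ∀ s : S, s ≠ s₀ → S}

theorem parentMap_of_ne {w : S} (hw : w ≠ s₀) : parentMap s₀ f w = f w hw := dif_neg hw

theorem exists_eq_singleton_of_step_singleton {Ster : Set S} {v : S} {c' : Finset S}
    (h : Step s₀ Ster f {v} c') :
    ∃ w ≠ s₀, parentMap s₀ f w = v ∧ c' = {w} := by
  obtain ⟨v', hv', -, w, hw, hfw, rfl⟩ := h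
  obtain rfl := Finset.mem_singleton.mp hv'
  exact ⟨w, hw, (parentMap_of_ne hw).trans hfw, by simp⟩

end TokenGame

theorem chain_reaches_depth_general {S : Type*} [DecidableEq S]
    (s₀ : S) (Ster : Set S) (f : ∀ s : S, s ≠ s₀ → S)
    (hterm : ∀ s : S, ∃ n : ℕ, (parentMap s₀ f)^[n] s = s₀)
    (n : ℕ) (cs : Fin (n + 1) → Finset S)
    (h0 : cs 0 = {s₀})
    (hstep : ∀ i : Fin n, Step s₀ Ster f (cs i.castSucc) (cs i.succ)) :
    ∃ v : S, cs (Fin.last n) = {v} ∧ Nat.find (hterm v) = n := by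
  suffices key : ∀ i : Fin (n + 1), ∃ v, cs i = {v} ∧ Nat.find (hterm v) = i by
    simpa using key (Fin.last n)
  refine Fin.induction ⟨s₀, h0, Nat.find_eq_zero _ |>.mpr rfl⟩ fun i ⟨v, hv, hdepth⟩ => ?_
  obtain ⟨w, hw, rfl, hcs⟩ := exists_eq_singleton_of_step_singleton (hv ▸ hstep i)
  refine ⟨w, hcs, ?_⟩
  rw [Nat.find_iterate_of_ne hw (hterm w) (hterm _), hdepth]
  simp

/-- The token moves strictly down the game tree, one level per move: a
configuration reached from `{s₀}` in exactly `n` steps is a singleton `{v}` where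
the depth of `v` (the number of applications of the parent map needed to reach
`s₀`) is exactly `n`. -/
theorem chain_reaches_depth {S : Type*} [Fintype S] [DecidableEq S]
    (s₀ : S) (Ster : Set S) (f : ∀ s : S, s ≠ s₀ → S)
    (hroot : ∀ s : S, Relation.ReflTransGen (Child s₀ f) s₀ s)
    (hterm : ∀ s : S, ∃ n : ℕ, (parentMap s₀ f)^[n] s = s₀)
    (n : ℕ) (cs : Fin (n + 1) → Finset S)
    (h0 : cs 0 = {s₀})
    (hstep : ∀ i : Fin n, Step s₀ Ster f (cs i.castSucc) (cs i.succ)) :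
    ∃ v : S, cs (Fin.last n) = {v} ∧ Nat.find (hterm v) = n :=
  chain_reaches_depth_general s₀ Ster f hterm n cs h0 hstep
end

section
/- Assume Ster is exactly the set of leaves of the tree. Then from every configuration reachable from the initial configuration {s₀}, some configuration {z} with z ∈ Ster is reachable under the reflexive-transitive closure of Step. Hence every Step-chain starting at {s₀} can be extended to a chain ending in a configuration with no Step-successor. (Every partial play of the constructed Ludii token game can be completed to a full trial ending in a terminal state.) -/
open Relation Function

theorem WellFounded.exists_reflTransGen_forall_not {α : Type*}
    {r : α → α → Prop} (hr : WellFounded (flip r)) (a : α) :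
    ∃ b, ReflTransGen r a b ∧ ∀ c, ¬ r b c := by
  obtain ⟨b, hab, hmax⟩ := hr.has_min {b | ReflTransGen r a b} ⟨a, .refl⟩
  exact ⟨b, hab, fun c hbc => hmax c (hab.tail hbc) hbc⟩

section Tree

variable {S : Type*} {s₀ : S} {f : ∀ s : S, s ≠ s₀ → S}

theorem isFixedPt_parentMap_root [DecidableEq S] : IsFixedPt (parentMap s₀ f) s₀ :=
  dif_pos rfl

theorem parentMap_of_child [DecidableEq S] {a b : S} (h : Child s₀ f a b) :
    parentMap s₀ f b = a := by
  obtain ⟨hb, rfl⟩ := h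
  exact dif_neg hb

theorem exists_iterate_parentMap_of_transGen_child [DecidableEq S] {a b : S}
    (h : TransGen (Child s₀ f) a b) : ∃ n, (parentMap s₀ f)^[n + 1] b = a := by
  induction h with
  | single hab => exact ⟨0, parentMap_of_child hab⟩
  | tail _ hbc ih =>
    obtain ⟨n, hn⟩ := ih
    exact ⟨n + 1, by rw [iterate_succ_apply, parentMap_of_child hbc, hn]⟩

theorem ne_root_of_transGen_child {a b : S} (h : TransGen (Child s₀ f) a b) : b ≠ s₀ := by
  obtain ⟨c, -, hb, -⟩ := TransGen.tail'_iff.mp h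
  exact hb

theorem not_transGen_child_self [DecidableEq S]
    (hterm : ∀ s : S, ∃ n : ℕ, (parentMap s₀ f)^[n] s = s₀) (v : S) :
    ¬ TransGen (Child s₀ f) v v := by
  intro hcycle
  obtain ⟨n, hn⟩ := exists_iterate_parentMap_of_transGen_child hcycle
  obtain ⟨k, hk⟩ := hterm v
  have hroot : IsFixedPt (parentMap s₀ f)^[k] s₀ :=
    (isFixedPt_parentMap_root (f := f)).iterate k
  have hperiodic : IsPeriodicPt (parentMap s₀ f)^[k] (n + 1) v := IsPeriodicPt.iterate hn k
  exact ne_root_of_transGen_child hcycle <|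
    hperiodic.eq_of_apply_eq (hroot.isPeriodicPt 1) n.succ_pos one_pos (by rw [hk, hroot.eq])

theorem wellFounded_flip_child [Finite S] [DecidableEq S]
    (hterm : ∀ s : S, ∃ n : ℕ, (parentMap s₀ f)^[n] s = s₀) :
    WellFounded (flip (Child s₀ f)) := by
  have : Std.Irrefl (TransGen (flip (Child s₀ f))) :=
    ⟨fun v h => not_transGen_child_self hterm v (transGen_swap.mp h)⟩
  exact Subrelation.wf TransGen.single (Finite.wellFounded_of_trans_of_irrefl _)

end Tree

section Game

variable {S : Type*} [DecidableEq S] {s₀ : S} {Ster : Set S} {f : ∀ s : S, s ≠ s₀ → S}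

theorem step_singleton {v w : S} (hv : v ∉ Ster) (hvw : Child s₀ f v w) :
    Step s₀ Ster f {v} {w} := by
  obtain ⟨hw, hfw⟩ := hvw
  exact ⟨v, Finset.mem_singleton_self v, hv, w, hw, hfw, by simp⟩

theorem not_step_singleton_of_mem {z : S} (hz : z ∈ Ster) (c : Finset S) :
    ¬ Step s₀ Ster f {z} c := by
  rintro ⟨v, hv, hvS, -⟩
  rw [Finset.mem_singleton] at hv
  exact hvS (hv ▸ hz)

theorem exists_eq_singleton_of_reflTransGen_step {v : S} {c : Finset S}
    (h : ReflTransGen (Step s₀ Ster f) {v} c) : ∃ w, c = {w} := by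
  induction h with
  | refl => exact ⟨v, rfl⟩
  | tail _ hstep ih =>
    obtain ⟨u, rfl⟩ := ih
    obtain ⟨u', hu', -, w, -, -, rfl⟩ := hstep
    rw [Finset.mem_singleton] at hu'
    exact ⟨w, by simp [hu']⟩

theorem reflTransGen_step_singleton (hSter : ∀ v w, Child s₀ f v w → v ∉ Ster) {v z : S}
    (h : ReflTransGen (Child s₀ f) v z) : ReflTransGen (Step s₀ Ster f) {v} {z} :=
  ReflTransGen.lift (fun u : S => ({u} : Finset S))
    (fun a b hab => step_singleton (hSter a b hab) hab) v z h

end Game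

theorem can_reach_terminal_general {S : Type*} [Fintype S] [DecidableEq S]
    (s₀ : S) (Ster : Set S) (f : ∀ s : S, s ≠ s₀ → S)
    (hterm : ∀ s : S, ∃ n : ℕ, (parentMap s₀ f)^[n] s = s₀)
    (hleaf : Ster = {s : S | ∀ w : S, ¬ Child s₀ f s w}) :
    (∀ c : Finset S, Relation.ReflTransGen (Step s₀ Ster f) {s₀} c →
      ∃ z : S, z ∈ Ster ∧
        Relation.ReflTransGen (Step s₀ Ster f) c ({z} : Finset S)) ∧
    (∀ c : Finset S, Relation.ReflTransGen (Step s₀ Ster f) {s₀} c →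
      ∃ c' : Finset S, Relation.ReflTransGen (Step s₀ Ster f) c c' ∧
        ¬ ∃ c'' : Finset S, Step s₀ Ster f c' c'') := by
  have hparent : ∀ v w, Child s₀ f v w → v ∉ Ster := by
    intro v w hvw hv
    rw [hleaf] at hv
    exact hv w hvw
  have reach_leaf : ∀ v, ∃ z ∈ Ster, ReflTransGen (Step s₀ Ster f) {v} {z} := by
    intro v
    obtain ⟨z, hvz, hz⟩ := (wellFounded_flip_child hterm).exists_reflTransGen_forall_not v
    exact ⟨z, hleaf ▸ hz, reflTransGen_step_singleton hparent hvz⟩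
  have reach_terminal : ∀ c : Finset S, ReflTransGen (Step s₀ Ster f) {s₀} c →
      ∃ z ∈ Ster, ReflTransGen (Step s₀ Ster f) c {z} := by
    intro c hc
    obtain ⟨v, rfl⟩ := exists_eq_singleton_of_reflTransGen_step hc
    exact reach_leaf v
  refine ⟨reach_terminal, fun c hc => ?_⟩
  obtain ⟨z, hz, hcz⟩ := reach_terminal c hc
  exact ⟨{z}, hcz, fun ⟨c'', hstep⟩ => not_step_singleton_of_mem hz c'' hstep⟩

/-- If `Ster` is exactly the set of leaves, then from every configuration
reachable from `{s₀}` some configuration `{z}` with `z ∈ Ster` is reachable;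
hence every `Step`-chain starting at `{s₀}` can be extended to one ending in a
configuration with no `Step`-successor. -/
theorem can_reach_terminal {S : Type*} [Fintype S] [DecidableEq S]
    (s₀ : S) (Ster : Set S) (f : ∀ s : S, s ≠ s₀ → S)
    (hroot : ∀ s : S, Relation.ReflTransGen (Child s₀ f) s₀ s)
    (hterm : ∀ s : S, ∃ n : ℕ, (parentMap s₀ f)^[n] s = s₀)
    (hleaf : Ster = {s : S | ∀ w : S, ¬ Child s₀ f s w}) :
    (∀ c : Finset S, Relation.ReflTransGen (Step s₀ Ster f) {s₀} c →
      ∃ z : S, z ∈ Ster ∧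
        Relation.ReflTransGen (Step s₀ Ster f) c ({z} : Finset S)) ∧
    (∀ c : Finset S, Relation.ReflTransGen (Step s₀ Ster f) {s₀} c →
      ∃ c' : Finset S, Relation.ReflTransGen (Step s₀ Ster f) c c' ∧
        ¬ ∃ c'' : Finset S, Step s₀ Ster f c' c'') :=
  can_reach_terminal_general s₀ Ster f hterm hleaf
end
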